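/- arXiv:1903.11979 — 8 statements merged into one kernel-verified Lean document; each statement's English description precedes it below -/
import Mathlib

section
/- Let τ>0, γ∈ℝ, let B:[0,τ]→ℝ³ be integrable, let Θ=(Θ₁,Θ₂,Θ₃)∈ℝ³, and let m:[0,τ]→ℝ³ be differentiable with integrable derivative and satisfy the Bloch equation m′(t) = m(t) × γB(t) − Θ • (m(t) − m_e) for all t∈(0,τ). Then for each component i∈{1,2,3} one has (m(0) − m(τ) + ∫₀^τ m(t) × γB(t) dt)ᵢ = Θᵢ · ωᵢ, where ω = ∫₀^τ m(t) dt − τ·m_e. In particular, if ωᵢ ≠ 0 then Θᵢ = (m(0) − m(τ) + ∫₀^τ m(t) × γB(t) dt)ᵢ / ωᵢ. -/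
open MeasureTheory

/-- The equilibrium magnetization `m_e = (0,0,1)`. -/
noncomputable def me : Fin 3 → ℝ := ![0, 0, 1]

/-- Integrating the Bloch equation over `(0,τ)` yields, componentwise,
`(m 0 - m τ + ∫₀^τ m × γB)ᵢ = Θᵢ · ωᵢ` with `ω = ∫₀^τ m - τ • m_e`; in particular
`Θᵢ` is determined whenever `ωᵢ ≠ 0`. -/
theorem stmt0 (τ : ℝ) (hτ : 0 < τ) (γ : ℝ) (B : ℝ → Fin 3 → ℝ)
    (hB : ∀ i, IntervalIntegrable (fun t => B t i) volume 0 τ)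
    (Θ : Fin 3 → ℝ) (m m' : ℝ → Fin 3 → ℝ)
    (hderiv : ∀ t ∈ Set.Icc (0:ℝ) τ, HasDerivAt m (m' t) t)
    (hint : ∀ i, IntervalIntegrable (fun t => m' t i) volume 0 τ)
    (hbloch : ∀ t ∈ Set.Ioo (0:ℝ) τ,
      m' t = crossProduct (m t) (γ • B t) - fun i => Θ i * (m t i - me i)) :
    ∀ i : Fin 3,
      m 0 i - m τ i + (∫ t in (0:ℝ)..τ, crossProduct (m t) (γ • B t) i)
        = Θ i * ((∫ t in (0:ℝ)..τ, m t i) - τ * me i) ∧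
      (((∫ t in (0:ℝ)..τ, m t i) - τ * me i) ≠ 0 →
        Θ i = (m 0 i - m τ i + ∫ t in (0:ℝ)..τ, crossProduct (m t) (γ • B t) i)
              / ((∫ t in (0:ℝ)..τ, m t i) - τ * me i)) := by
  have hτle : (0:ℝ) ≤ τ := hτ.le
  have huIcc : Set.uIcc (0:ℝ) τ = Set.Icc 0 τ := Set.uIcc_of_le hτle
  -- componentwise derivatives
  have hderiv' : ∀ i : Fin 3, ∀ t ∈ Set.uIcc (0:ℝ) τ,
      HasDerivAt (fun s => m s i) (m' t i) t := by
    intro i t ht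
    rw [huIcc] at ht
    exact (hasDerivAt_pi.1 (hderiv t ht)) i
  -- continuity of components of m on uIcc
  have hcont : ∀ i : Fin 3, ContinuousOn (fun t => m t i) (Set.uIcc (0:ℝ) τ) := by
    intro i t ht
    exact ((hderiv' i t ht).continuousAt).continuousWithinAt
  -- integrability of components of m
  have hmint : ∀ i : Fin 3, IntervalIntegrable (fun t => m t i) volume 0 τ := fun i =>
    (hcont i).intervalIntegrable
  -- integrability of γ • B components
  have hgB : ∀ i : Fin 3, IntervalIntegrable (fun t => γ * B t i) volume 0 τ := fun i =>
    (hB i).const_mul γ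
  -- integrability of cross product components
  have hcross : ∀ i : Fin 3,
      IntervalIntegrable (fun t => crossProduct (m t) (γ • B t) i) volume 0 τ := by
    intro i
    have h : ∀ j k : Fin 3, IntervalIntegrable
        (fun t => m t j * (γ * B t k)) volume 0 τ := fun j k =>
      (hgB k).continuousOn_mul (hcont j)
    have e : (fun t => crossProduct (m t) (γ • B t) i)
        = fun t => (![m t 1 * (γ * B t 2) - m t 2 * (γ * B t 1),
            m t 2 * (γ * B t 0) - m t 0 * (γ * B t 2),
            m t 0 * (γ * B t 1) - m t 1 * (γ * B t 0)] : Fin 3 → ℝ) i := by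
      funext t
      rw [cross_apply]
      simp [Pi.smul_apply, smul_eq_mul, mul_comm, mul_left_comm]
    rw [e]
    fin_cases i <;>
      simp only [Matrix.cons_val_zero, Matrix.cons_val_one, Matrix.head_cons,
        Matrix.cons_val_two, Matrix.tail_cons, Fin.mk_zero, Fin.mk_one] <;>
      exact (h _ _).sub (h _ _)
  intro i
  -- FTC
  have hftc : (∫ t in (0:ℝ)..τ, m' t i) = m τ i - m 0 i :=
    intervalIntegral.integral_eq_sub_of_hasDerivAt (hderiv' i) (hint i)
  -- rewrite the integral of m' using the Bloch equation
  have hae : (∫ t in (0:ℝ)..τ, m' t i)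
      = ∫ t in (0:ℝ)..τ, (crossProduct (m t) (γ • B t) i - Θ i * (m t i - me i)) := by
    apply intervalIntegral.integral_congr_ae
    have h1 : ∀ᵐ t ∂(volume : Measure ℝ), t ≠ τ := by
      simpa using (ae_iff.2 (by simp : volume {t : ℝ | ¬ t ≠ τ} = 0))
    filter_upwards [h1] with t ht htmem
    rw [Set.uIoc_of_le hτle] at htmem
    have : t ∈ Set.Ioo (0:ℝ) τ := ⟨htmem.1, lt_of_le_of_ne htmem.2 ht⟩
    rw [hbloch t this]
    simp
  have hsplit : (∫ t in (0:ℝ)..τ, (crossProduct (m t) (γ • B t) i - Θ i * (m t i - me i)))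
      = (∫ t in (0:ℝ)..τ, crossProduct (m t) (γ • B t) i)
        - Θ i * ((∫ t in (0:ℝ)..τ, m t i) - τ * me i) := by
    rw [intervalIntegral.integral_sub (hcross i)
      (((hmint i).sub (intervalIntegrable_const)).const_mul (Θ i)),
      intervalIntegral.integral_const_mul,
      intervalIntegral.integral_sub (hmint i) intervalIntegrable_const,
      intervalIntegral.integral_const]
    simp only [smul_eq_mul]
    ring_nf
  have key : m 0 i - m τ i + (∫ t in (0:ℝ)..τ, crossProduct (m t) (γ • B t) i)
      = Θ i * ((∫ t in (0:ℝ)..τ, m t i) - τ * me i) := by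
    have := hae.symm.trans hftc
    rw [hsplit] at this
    linarith
  exact ⟨key, fun hne => by rw [key, mul_div_assoc, div_self hne, mul_one]⟩
end

section
/- Let τ>0, γ∈ℝ, let B:[0,τ]→ℝ³ be integrable, and let m:[0,τ]→ℝ³ be differentiable with integrable derivative. Suppose there exists c_τ>0 such that each component of ω = ∫₀^τ m(t) dt − τ·m_e satisfies |ωᵢ| ≥ c_τ for i=1,2,3. If m satisfies the Bloch equation m′(t) = m(t) × γB(t) − Θᵃ • (m(t) − m_e) for all t∈(0,τ) and also m′(t) = m(t) × γB(t) − Θᵇ • (m(t) − m_e) for all t∈(0,τ), for two parameter vectors Θᵃ, Θᵇ ∈ ℝ³, then Θᵃ = Θᵇ. In particular the tissue parameters θ=(T₁,T₂) with Θ=(1/T₂,1/T₂,1/T₁) associated with a given trajectory m are uniquely determined. -/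
open MeasureTheory

/-- If the components of `ω = ∫₀^τ m - τ • m_e` are bounded away from zero, then the
relaxation parameter vector `Θ` in the Bloch equation satisfied by a given trajectory `m`
is unique; in particular the tissue parameters `θ = (T₁,T₂)` with `Θ = (1/T₂,1/T₂,1/T₁)`
are uniquely determined. -/
theorem stmt1 (τ : ℝ) (hτ : 0 < τ) (γ : ℝ) (B : ℝ → Fin 3 → ℝ)
    (hB : ∀ i, IntervalIntegrable (fun t => B t i) volume 0 τ)
    (m m' : ℝ → Fin 3 → ℝ)
    (hderiv : ∀ t ∈ Set.Icc (0:ℝ) τ, HasDerivAt m (m' t) t)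
    (hint : ∀ i, IntervalIntegrable (fun t => m' t i) volume 0 τ)
    (cτ : ℝ) (hcτ : 0 < cτ)
    (hω : ∀ i : Fin 3, cτ ≤ |(∫ t in (0:ℝ)..τ, m t i) - τ * me i|)
    (Θa Θb : Fin 3 → ℝ)
    (ha : ∀ t ∈ Set.Ioo (0:ℝ) τ,
      m' t = crossProduct (m t) (γ • B t) - fun i => Θa i * (m t i - me i))
    (hb : ∀ t ∈ Set.Ioo (0:ℝ) τ,
      m' t = crossProduct (m t) (γ • B t) - fun i => Θb i * (m t i - me i))
    (T1a T2a T1b T2b : ℝ)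
    (hT1a : 0 < T1a) (hT2a : 0 < T2a) (hT1b : 0 < T1b) (hT2b : 0 < T2b)
    (hΘa : Θa = ![1 / T2a, 1 / T2a, 1 / T1a])
    (hΘb : Θb = ![1 / T2b, 1 / T2b, 1 / T1b]) :
    Θa = Θb ∧ (T1a, T2a) = (T1b, T2b) := by
  -- On (0,τ), the two equations force (Θa i - Θb i) * (m t i - me i) = 0.
  have hkey : ∀ i, Θa i = Θb i := by
    intro i
    by_contra hne
    have hval : ∀ t ∈ Set.Ioo (0:ℝ) τ, m t i = me i := by
      intro t ht
      have h := (ha t ht).symm.trans (hb t ht)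
      have h2 := congrFun h i
      simp only [Pi.sub_apply] at h2
      have h3 : (Θa i - Θb i) * (m t i - me i) = 0 := by ring_nf; linarith [h2]
      rcases mul_eq_zero.1 h3 with h4 | h4
      · exact absurd (sub_eq_zero.1 h4) hne
      · linarith [sub_eq_zero.1 h4]
    -- Then the integral of m · i equals τ * me i, contradiction.
    have hae : ∀ᵐ t ∂volume, t ∈ Set.uIoc (0:ℝ) τ → m t i = me i := by
      have hτ' : (volume : Measure ℝ) {τ} = 0 := measure_singleton τ
      filter_upwards [measure_eq_zero_iff_ae_notMem.mp hτ'] with t ht htmem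
      rw [Set.uIoc_of_le hτ.le] at htmem
      exact hval t ⟨htmem.1, lt_of_le_of_ne htmem.2 (by simpa using ht)⟩
    have hint : (∫ t in (0:ℝ)..τ, m t i) = τ * me i := by
      rw [intervalIntegral.integral_congr_ae hae]
      simp [intervalIntegral.integral_const, smul_eq_mul]
    have := hω i
    rw [hint] at this
    simp at this
    linarith
  have hΘ : Θa = Θb := funext hkey
  refine ⟨hΘ, ?_⟩
  have h0 := hkey 0
  have h2 := hkey 2
  rw [hΘa, hΘb] at h0 h2
  simp at h0 h2
  have hT2 : T2a = T2b := h0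
  have hT1 : T1a = T1b := h2
  simp [hT1, hT2]
end

section
/- Let τ>0, γ∈ℝ, let B:[0,τ]→ℝ³ be continuous and bounded, let m₀∈ℝ³, and let θ₁, θ₂ ∈ (0,∞)². Let m¹, m² : [0,τ]→ℝ³ be differentiable with integrable derivatives, with m¹(0)=m²(0)=m₀, m¹ satisfying the Bloch equation with parameter Θ(θ₁)=(1/T₂¹,1/T₂¹,1/T₁¹) and m² satisfying the Bloch equation with parameter Θ(θ₂)=(1/T₂²,1/T₂²,1/T₁²). Suppose there exists c_τ>0 such that for both trajectories every component of ∫₀^τ m(t) dt − τ·m_e has absolute value at least c_τ. Then m¹(t)=m²(t) for all t∈[0,τ] if and only if θ₁=θ₂. -/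
/-!
If `m¹ = m²` on `[0,τ]`, subtracting the two Bloch equations gives
`Θ(θ₁) • (m − m_e) = Θ(θ₂) • (m − m_e)` on `(0,τ)`. Integrating over `(0,τ)`, the nondegeneracy
condition lets one cancel `∫₀^τ m − τ m_e` componentwise, so `Θ(θ₁) = Θ(θ₂)`, and `Θ` determines
`θ`. Conversely, for equal parameters the Bloch vector field is Lipschitz in `m` uniformly in `t`
because `B` is bounded, so uniqueness for ODEs gives `m¹ = m²`. The Bloch equation is only
assumed on the open interval; at `t = 0` the right derivative is recovered from the continuity
of the vector field along the trajectory.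
-/

open MeasureTheory

/-- The relaxation vector `Θ = (1/T₂, 1/T₂, 1/T₁)` associated with `θ = (T₁,T₂)`. -/
noncomputable def relax (θ : ℝ × ℝ) : Fin 3 → ℝ := ![1 / θ.2, 1 / θ.2, 1 / θ.1]

open Set Filter Topology

theorem norm_crossProduct_le (x y : Fin 3 → ℝ) : ‖crossProduct x y‖ ≤ 2 * ‖x‖ * ‖y‖ := by
  have h (i j k l : Fin 3) : |x i * y j - x k * y l| ≤ 2 * ‖x‖ * ‖y‖ :=
    calc |x i * y j - x k * y l| ≤ ‖x i‖ * ‖y j‖ + ‖x k‖ * ‖y l‖ := by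
          simpa only [Real.norm_eq_abs, abs_mul] using abs_sub (x i * y j) (x k * y l)
      _ ≤ ‖x‖ * ‖y‖ + ‖x‖ * ‖y‖ := by gcongr <;> apply norm_le_pi_norm
      _ = 2 * ‖x‖ * ‖y‖ := by ring
  refine (pi_norm_le_iff_of_nonneg (by positivity)).2 fun i => ?_
  rw [Real.norm_eq_abs]
  fin_cases i <;> simpa [cross_apply] using h _ _ _ _

theorem lipschitzWith_crossProduct_sub_mul (b Θ e : Fin 3 → ℝ) :
    LipschitzWith (2 * ‖b‖₊ + ‖Θ‖₊) fun x => crossProduct x b - Θ * (x - e) := by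
  refine LipschitzWith.of_dist_le_mul fun x y => ?_
  have hsub : crossProduct x b - Θ * (x - e) - (crossProduct y b - Θ * (y - e)) =
      crossProduct (x - y) b - Θ * (x - y) := by
    rw [LinearMap.map_sub₂]
    ring
  rw [dist_eq_norm, dist_eq_norm, hsub]
  push_cast
  calc ‖crossProduct (x - y) b - Θ * (x - y)‖
      ≤ 2 * ‖x - y‖ * ‖b‖ + ‖Θ‖ * ‖x - y‖ :=
        (norm_sub_le _ _).trans (add_le_add (norm_crossProduct_le _ _) (norm_mul_le _ _))
    _ = (2 * ‖b‖ + ‖Θ‖) * ‖x - y‖ := by ring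

theorem forall_Ico_hasDerivWithinAt_Ici {E : Type*} [NormedAddCommGroup E] [NormedSpace ℝ E]
    {f v : ℝ → E} {a b : ℝ} (hf : ∀ t ∈ Ioo a b, HasDerivAt f (v t) t)
    (hfc : ContinuousOn f (Icc a b)) (hvc : ContinuousOn v (Icc a b)) :
    ∀ t ∈ Ico a b, HasDerivWithinAt f (v t) (Ici t) t := by
  rintro t ⟨hat, htb⟩
  rcases hat.eq_or_lt with rfl | hat
  · have hmem : a ∈ Icc a b := left_mem_Icc.2 htb.le
    have hIoo : Ioo a b ∈ 𝓝[>] a := Ioo_mem_nhdsGT htb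
    have hlim : Tendsto v (𝓝[>] a) (𝓝 (v a)) :=
      ((hvc a hmem).mono_of_mem_nhdsWithin (mem_of_superset hIoo Ioo_subset_Icc_self)).tendsto
    have hderiv : v =ᶠ[𝓝[>] a] deriv f :=
      eventually_of_mem hIoo fun s hs => (hf s hs).deriv.symm
    exact hasDerivWithinAt_Ici_of_tendsto_deriv
      (fun s hs => (hf s hs).differentiableAt.differentiableWithinAt)
      ((hfc a hmem).mono Ioo_subset_Icc_self) hIoo (hlim.congr' hderiv)
  · exact (hf t ⟨hat, htb⟩).hasDerivWithinAt

theorem eq_of_mul_eq_mul_of_integral_ne_zero {f : ℝ → ℝ} {a b c₁ c₂ : ℝ} (hab : a ≤ b)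
    (h : ∀ t ∈ Ioo a b, c₁ * f t = c₂ * f t) (hf : ∫ t in a..b, f t ≠ 0) : c₁ = c₂ := by
  have hint := intervalIntegral.integral_congr_Ioo_of_le (μ := volume) hab h
  rw [intervalIntegral.integral_const_mul, intervalIntegral.integral_const_mul] at hint
  exact mul_right_cancel₀ hf hint

theorem relax_injective : Function.Injective relax := by
  intro θ₁ θ₂ h
  have h₁ := congrFun h 2
  have h₂ := congrFun h 0
  simp only [relax, one_div, Matrix.cons_val, inv_inj] at h₁ h₂
  exact Prod.ext h₁ h₂

noncomputable def blochField (γ : ℝ) (B : ℝ → Fin 3 → ℝ) (Θ : Fin 3 → ℝ) (t : ℝ)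
    (x : Fin 3 → ℝ) : Fin 3 → ℝ :=
  crossProduct x (γ • B t) - Θ * (x - me)

section blochField

variable {γ : ℝ} {B : ℝ → Fin 3 → ℝ}

theorem lipschitzWith_blochField {Bmax : ℝ} (hB : ∀ t, ‖B t‖ ≤ Bmax) (Θ : Fin 3 → ℝ) (t : ℝ) :
    LipschitzWith (2 * (|γ| * Bmax).toNNReal + ‖Θ‖₊) (blochField γ B Θ t) := by
  refine (lipschitzWith_crossProduct_sub_mul (γ • B t) Θ me).weaken ?_
  gcongr
  refine NNReal.le_toNNReal_of_coe_le ?_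
  rw [coe_nnnorm, norm_smul, Real.norm_eq_abs]
  exact mul_le_mul_of_nonneg_left (hB t) (abs_nonneg γ)

theorem continuousOn_blochField (hB : Continuous B) (Θ : Fin 3 → ℝ) {m : ℝ → Fin 3 → ℝ}
    {s : Set ℝ} (hm : ContinuousOn m s) :
    ContinuousOn (fun t => blochField γ B Θ t (m t)) s := by
  simp only [blochField, cross_apply]
  fun_prop

theorem eqOn_of_hasDerivAt_blochField (hB : Continuous B) {Bmax : ℝ}
    (hBbd : ∀ t, ‖B t‖ ≤ Bmax) {Θ : Fin 3 → ℝ} {a b : ℝ} {m₁ m₂ : ℝ → Fin 3 → ℝ}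
    (hc₁ : ContinuousOn m₁ (Icc a b))
    (hd₁ : ∀ t ∈ Ioo a b, HasDerivAt m₁ (blochField γ B Θ t (m₁ t)) t)
    (hc₂ : ContinuousOn m₂ (Icc a b))
    (hd₂ : ∀ t ∈ Ioo a b, HasDerivAt m₂ (blochField γ B Θ t (m₂ t)) t)
    (ha : m₁ a = m₂ a) : EqOn m₁ m₂ (Icc a b) :=
  ODE_solution_unique (lipschitzWith_blochField hBbd Θ)
    hc₁ (forall_Ico_hasDerivWithinAt_Ici hd₁ hc₁ (continuousOn_blochField hB Θ hc₁))
    hc₂ (forall_Ico_hasDerivWithinAt_Ici hd₂ hc₂ (continuousOn_blochField hB Θ hc₂)) ha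

theorem eq_of_hasDerivAt_blochField {Θ₁ Θ₂ : Fin 3 → ℝ} {τ : ℝ} (hτ : 0 ≤ τ)
    {m : ℝ → Fin 3 → ℝ} (hc : ContinuousOn m (Icc 0 τ))
    (hd₁ : ∀ t ∈ Ioo 0 τ, HasDerivAt m (blochField γ B Θ₁ t (m t)) t)
    (hd₂ : ∀ t ∈ Ioo 0 τ, HasDerivAt m (blochField γ B Θ₂ t (m t)) t)
    (hω : ∀ i, (∫ t in (0 : ℝ)..τ, m t i) - τ * me i ≠ 0) : Θ₁ = Θ₂ := by
  funext i
  refine eq_of_mul_eq_mul_of_integral_ne_zero (f := fun t => m t i - me i) hτ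
    (fun t ht => ?_) ?_
  · simpa [blochField] using congrFun ((hd₁ t ht).unique (hd₂ t ht)) i
  · have hmi : IntervalIntegrable (fun t => m t i) volume 0 τ :=
      ((continuous_apply i).comp_continuousOn hc).intervalIntegrable_of_Icc hτ
    rw [intervalIntegral.integral_sub hmi intervalIntegrable_const,
      intervalIntegral.integral_const, smul_eq_mul, sub_zero]
    exact hω i

end blochField

theorem stmt2_general (τ : ℝ) (hτ : 0 < τ) (γ : ℝ) (B : ℝ → Fin 3 → ℝ)
    (hBcont : Continuous B) (Bmax : ℝ) (hBbd : ∀ t, ‖B t‖ ≤ Bmax)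
    (m0 : Fin 3 → ℝ) (θ1 θ2 : ℝ × ℝ)
    (m1 m1' m2 m2' : ℝ → Fin 3 → ℝ)
    (h1init : m1 0 = m0) (h2init : m2 0 = m0)
    (hd1 : ∀ t ∈ Set.Icc (0:ℝ) τ, HasDerivAt m1 (m1' t) t)
    (hd2 : ∀ t ∈ Set.Icc (0:ℝ) τ, HasDerivAt m2 (m2' t) t)
    (hb1 : ∀ t ∈ Set.Ioo (0:ℝ) τ,
      m1' t = crossProduct (m1 t) (γ • B t) - fun i => relax θ1 i * (m1 t i - me i))
    (hb2 : ∀ t ∈ Set.Ioo (0:ℝ) τ,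
      m2' t = crossProduct (m2 t) (γ • B t) - fun i => relax θ2 i * (m2 t i - me i))
    (cτ : ℝ) (hcτ : 0 < cτ)
    (hω1 : ∀ i : Fin 3, cτ ≤ |(∫ t in (0:ℝ)..τ, m1 t i) - τ * me i|) :
    (∀ t ∈ Set.Icc (0:ℝ) τ, m1 t = m2 t) ↔ θ1 = θ2 := by
  have hc1 : ContinuousOn m1 (Icc 0 τ) := fun t ht => (hd1 t ht).continuousAt.continuousWithinAt
  have hc2 : ContinuousOn m2 (Icc 0 τ) := fun t ht => (hd2 t ht).continuousAt.continuousWithinAt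
  have hm1 (t : ℝ) (ht : t ∈ Ioo 0 τ) :
      HasDerivAt m1 (blochField γ B (relax θ1) t (m1 t)) t :=
    (hd1 t (Ioo_subset_Icc_self ht)).congr_deriv (hb1 t ht)
  have hm2 (t : ℝ) (ht : t ∈ Ioo 0 τ) :
      HasDerivAt m2 (blochField γ B (relax θ2) t (m2 t)) t :=
    (hd2 t (Ioo_subset_Icc_self ht)).congr_deriv (hb2 t ht)
  constructor
  · intro heq
    refine relax_injective (eq_of_hasDerivAt_blochField hτ.le hc1 hm1 (fun t ht => ?_)
      fun i => abs_pos.mp (hcτ.trans_le (hω1 i)))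
    have hnear : m1 =ᶠ[𝓝 t] m2 := eventually_of_mem (Ioo_mem_nhds ht.1 ht.2) fun s hs =>
      heq s (Ioo_subset_Icc_self hs)
    simpa only [heq t (Ioo_subset_Icc_self ht)] using (hm2 t ht).congr_of_eventuallyEq hnear
  · rintro rfl
    exact eqOn_of_hasDerivAt_blochField hBcont hBbd hc1 hm1 hc2 hm2 (h1init.trans h2init.symm)

/-- Bijectivity of the Bloch mapping: two Bloch trajectories with the same initial value and
with parameters `θ₁`, `θ₂`, both satisfying the nondegeneracy condition on
`∫₀^τ m - τ • m_e`, coincide on `[0,τ]` if and only if `θ₁ = θ₂`. -/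
theorem stmt2 (τ : ℝ) (hτ : 0 < τ) (γ : ℝ) (B : ℝ → Fin 3 → ℝ)
    (hBcont : Continuous B) (Bmax : ℝ) (hBbd : ∀ t, ‖B t‖ ≤ Bmax)
    (m0 : Fin 3 → ℝ) (θ1 θ2 : ℝ × ℝ)
    (hθ1 : 0 < θ1.1 ∧ 0 < θ1.2) (hθ2 : 0 < θ2.1 ∧ 0 < θ2.2)
    (m1 m1' m2 m2' : ℝ → Fin 3 → ℝ)
    (h1init : m1 0 = m0) (h2init : m2 0 = m0)
    (hd1 : ∀ t ∈ Set.Icc (0:ℝ) τ, HasDerivAt m1 (m1' t) t)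
    (hd2 : ∀ t ∈ Set.Icc (0:ℝ) τ, HasDerivAt m2 (m2' t) t)
    (hint1 : ∀ i, IntervalIntegrable (fun t => m1' t i) volume 0 τ)
    (hint2 : ∀ i, IntervalIntegrable (fun t => m2' t i) volume 0 τ)
    (hb1 : ∀ t ∈ Set.Ioo (0:ℝ) τ,
      m1' t = crossProduct (m1 t) (γ • B t) - fun i => relax θ1 i * (m1 t i - me i))
    (hb2 : ∀ t ∈ Set.Ioo (0:ℝ) τ,
      m2' t = crossProduct (m2 t) (γ • B t) - fun i => relax θ2 i * (m2 t i - me i))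
    (cτ : ℝ) (hcτ : 0 < cτ)
    (hω1 : ∀ i : Fin 3, cτ ≤ |(∫ t in (0:ℝ)..τ, m1 t i) - τ * me i|)
    (hω2 : ∀ i : Fin 3, cτ ≤ |(∫ t in (0:ℝ)..τ, m2 t i) - τ * me i|) :
    (∀ t ∈ Set.Icc (0:ℝ) τ, m1 t = m2 t) ↔ θ1 = θ2 :=
  stmt2_general τ hτ γ B hBcont Bmax hBbd m0 θ1 θ2 m1 m1' m2 m2' h1init h2init hd1 hd2 hb1 hb2 cτ
    hcτ hω1
end

section
/- Let τ>0, γ∈ℝ, 0<a≤b, B_max>0, and c_τ>0. Then there exists a constant C>0, depending only on τ, a, b, γ, B_max and c_τ (and in particular not on the trajectories), with the following property. Let B:[0,τ]→ℝ³ be integrable with ‖B(t)‖≤B_max for all t, let θ=(T₁,T₂) and θᵟ=(T₁ᵟ,T₂ᵟ) lie in [a,b]², and let m, mᵟ : [0,τ]→ℝ³ be differentiable with integrable derivatives, satisfying the Bloch equation with parameters Θ(θ) and Θ(θᵟ) respectively, such that every component of ∫₀^τ m(t) dt − τ·m_e and of ∫₀^τ mᵟ(t) dt − τ·m_e has absolute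 value at least c_τ. Then ‖θ − θᵟ‖ ≤ C ( ∫₀^τ ‖m(t) − mᵟ(t)‖ dt + ∫₀^τ ‖m′(t) − (mᵟ)′(t)‖ dt ). In particular, if the right-hand bracket is at most δ then ‖θ − θᵟ‖ ≤ C δ with C independent of δ. -/
/-!
Integrating the Bloch equation over `(0, τ)` gives, componentwise,
`Θᵢ (∫ mᵢ - τ m_{e,i}) = ∫ (m × γB)ᵢ - ∫ m'ᵢ`, a linear equation for `Θᵢ`. Subtracting the same
identity for `mᵟ` bounds `(Θᵢ - Θᵟᵢ)(∫ mᵢ - τ m_{e,i})` by the two data misfits, since the cross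
product term is Lipschitz in `m` with constant `|γ| B_max`. The nondegeneracy condition lets us
divide by `∫ mᵢ - τ m_{e,i}`, and `T ↦ 1 / T` is bi-Lipschitz on `[a, b]`.
-/

open MeasureTheory

/-- The Euclidean norm on `ℝ³`. -/
noncomputable def enorm3 (v : Fin 3 → ℝ) : ℝ := Real.sqrt (∑ i, v i ^ 2)

/-- The Euclidean norm on `ℝ²`. -/
noncomputable def enorm2 (v : ℝ × ℝ) : ℝ := Real.sqrt (v.1 ^ 2 + v.2 ^ 2)

lemma enorm3_eq_norm (v : Fin 3 → ℝ) : enorm3 v = ‖WithLp.toLp 2 v‖ := by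
  simp [enorm3, EuclideanSpace.norm_eq]

lemma enorm3_nonneg (v : Fin 3 → ℝ) : 0 ≤ enorm3 v := Real.sqrt_nonneg _

lemma abs_apply_le_enorm3 (v : Fin 3 → ℝ) (i : Fin 3) : |v i| ≤ enorm3 v := by
  simpa [enorm3_eq_norm] using PiLp.norm_apply_le (WithLp.toLp 2 v) i

lemma enorm3_smul (c : ℝ) (v : Fin 3 → ℝ) : enorm3 (c • v) = |c| * enorm3 v := by
  simp [enorm3_eq_norm, WithLp.toLp_smul, norm_smul]

lemma enorm3_eq_sqrt_dotProduct (v : Fin 3 → ℝ) : enorm3 v = √(v ⬝ᵥ v) := by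
  simp [enorm3, dotProduct, sq]

lemma enorm3_crossProduct_le (u w : Fin 3 → ℝ) :
    enorm3 (crossProduct u w) ≤ enorm3 u * enorm3 w := by
  have hu : 0 ≤ u ⬝ᵥ u := Finset.sum_nonneg fun i _ => mul_self_nonneg (u i)
  simp only [enorm3_eq_sqrt_dotProduct, ← Real.sqrt_mul hu]
  apply Real.sqrt_le_sqrt
  rw [cross_dot_cross, dotProduct_comm w u]
  nlinarith [sq_nonneg (u ⬝ᵥ w)]

lemma abs_crossProduct_apply_sub_le (v vδ w : Fin 3 → ℝ) (γ : ℝ) (i : Fin 3) :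
    |crossProduct v (γ • w) i - crossProduct vδ (γ • w) i| ≤ |γ| * enorm3 w * enorm3 (v - vδ) := by
  rw [← Pi.sub_apply, ← LinearMap.map_sub₂, mul_comm, ← enorm3_smul]
  exact (abs_apply_le_enorm3 _ i).trans (enorm3_crossProduct_le _ _)

lemma enorm2_le_abs_add_abs (v : ℝ × ℝ) : enorm2 v ≤ |v.1| + |v.2| := by
  rw [enorm2, Real.sqrt_le_left (by positivity)]
  nlinarith [abs_mul_abs_self v.1, abs_mul_abs_self v.2, abs_nonneg v.1, abs_nonneg v.2]

lemma intervalIntegrable_enorm3 {g : ℝ → Fin 3 → ℝ} {a b : ℝ}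
    (h : ∀ i, IntervalIntegrable (fun t => g t i) volume a b) :
    IntervalIntegrable (fun t => enorm3 (g t)) volume a b := by
  simp only [intervalIntegrable_iff, IntegrableOn, enorm3_eq_norm] at h ⊢
  exact ((PiLp.continuousLinearEquiv 2 ℝ fun _ : Fin 3 => ℝ).symm.toContinuousLinearMap
    |>.integrable_comp (integrable_pi_iff.2 h)).norm

lemma abs_integral_sub_integral_le {f g h : ℝ → ℝ} {a b : ℝ} (hab : a ≤ b)
    (hf : IntervalIntegrable f volume a b) (hg : IntervalIntegrable g volume a b)
    (hh : IntervalIntegrable h volume a b) (hfg : ∀ t ∈ Set.Ioc a b, |f t - g t| ≤ h t) :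
    |(∫ t in a..b, f t) - ∫ t in a..b, g t| ≤ ∫ t in a..b, h t := by
  rw [← intervalIntegral.integral_sub hf hg]
  exact intervalIntegral.norm_integral_le_of_norm_le hab
    (ae_of_all _ fun t ht => (Real.norm_eq_abs _).trans_le (hfg t ht)) hh

lemma abs_sub_le_sq_mul_abs_one_div_sub {x y a b : ℝ} (ha : 0 < a)
    (hx : x ∈ Set.Icc a b) (hy : y ∈ Set.Icc a b) : |x - y| ≤ b ^ 2 * |1 / x - 1 / y| := by
  have hx0 : 0 < x := ha.trans_le hx.1
  have hy0 : 0 < y := ha.trans_le hy.1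
  have hxy : x - y = x * y * (1 / y - 1 / x) := by field_simp
  rw [hxy, abs_mul, abs_sub_comm, abs_of_pos (mul_pos hx0 hy0), sq]
  gcongr <;> linarith [hx.2, hy.2]

lemma abs_relax_le {θ : ℝ × ℝ} {a : ℝ} (ha : 0 < a) (h1 : a ≤ θ.1) (h2 : a ≤ θ.2) (i : Fin 3) :
    |relax θ i| ≤ 1 / a := by
  have key : ∀ T, a ≤ T → |1 / T| ≤ 1 / a := fun T hT => by
    rw [abs_of_pos (one_div_pos.2 (ha.trans_le hT))]
    exact one_div_le_one_div_of_le ha hT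
  fin_cases i
  exacts [key _ h2, key _ h2, key _ h1]

lemma abs_sub_mul_le_of_mul_eq_sub {Θ Θδ D Dδ N Nδ P Pδ c κ : ℝ}
    (h : Θ * D = N - P) (hδ : Θδ * Dδ = Nδ - Pδ) (hc : c ≤ |D|) (hκ : |Θδ| ≤ κ) :
    |Θ - Θδ| * c ≤ |N - Nδ| + |P - Pδ| + κ * |D - Dδ| := by
  have hid : (Θ - Θδ) * D = (N - Nδ) - (P - Pδ) - Θδ * (D - Dδ) := by
    linear_combination h - hδ
  calc |Θ - Θδ| * c ≤ |(Θ - Θδ) * D| := by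
        rw [abs_mul]; exact mul_le_mul_of_nonneg_left hc (abs_nonneg _)
    _ ≤ |N - Nδ| + |P - Pδ| + |Θδ| * |D - Dδ| := by
        rw [hid, ← abs_mul]
        exact (abs_sub _ _).trans (add_le_add_left (abs_sub _ _) _)
    _ ≤ |N - Nδ| + |P - Pδ| + κ * |D - Dδ| := by gcongr

section Bloch

variable {τ γ : ℝ} {B m m' mδ mδ' : ℝ → Fin 3 → ℝ} {Θ Θδ : Fin 3 → ℝ}

lemma intervalIntegrable_crossProduct_apply
    (hB : ∀ i, IntervalIntegrable (fun t => B t i) volume 0 τ)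
    (hm : ContinuousOn m (Set.uIcc 0 τ)) (i : Fin 3) :
    IntervalIntegrable (fun t => crossProduct (m t) (γ • B t) i) volume 0 τ := by
  have hmj (j : Fin 3) : ContinuousOn (fun t => m t j) (Set.uIcc 0 τ) :=
    (continuous_apply j).comp_continuousOn hm
  have hBj : ∀ j, IntervalIntegrable (fun t => γ * B t j) volume 0 τ :=
    fun j => (hB j).const_mul γ
  fin_cases i <;>
    simp only [cross_apply, Pi.smul_apply, smul_eq_mul, Fin.zero_eta, Fin.mk_one, Fin.reduceFinMk,
      Matrix.cons_val] <;>
    exact ((hBj _).continuousOn_mul (hmj _)).sub ((hBj _).continuousOn_mul (hmj _))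

lemma mul_integral_sub_eq_of_bloch (hτ : 0 ≤ τ)
    (hB : ∀ i, IntervalIntegrable (fun t => B t i) volume 0 τ)
    (hm : ContinuousOn m (Set.uIcc 0 τ))
    (heq : ∀ t ∈ Set.Ioo (0:ℝ) τ,
      m' t = crossProduct (m t) (γ • B t) - fun i => Θ i * (m t i - me i)) (i : Fin 3) :
    Θ i * ((∫ t in (0:ℝ)..τ, m t i) - τ * me i)
      = (∫ t in (0:ℝ)..τ, crossProduct (m t) (γ • B t) i) - ∫ t in (0:ℝ)..τ, m' t i := by
  have hmi : ContinuousOn (fun t => m t i) (Set.uIcc 0 τ) :=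
    (continuous_apply i).comp_continuousOn hm
  have hint : (∫ t in (0:ℝ)..τ, m' t i)
      = ∫ t in (0:ℝ)..τ, (crossProduct (m t) (γ • B t) i - Θ i * (m t i - me i)) := by
    simp only [intervalIntegral.integral_of_le hτ, integral_Ioc_eq_integral_Ioo]
    exact setIntegral_congr_fun measurableSet_Ioo fun t ht => by simp [heq t ht]
  have hlin : IntervalIntegrable (fun t => Θ i * (m t i - me i)) volume 0 τ :=
    (hmi.sub continuousOn_const).intervalIntegrable.const_mul _
  rw [hint, intervalIntegral.integral_sub (intervalIntegrable_crossProduct_apply hB hm i) hlin,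
    intervalIntegral.integral_const_mul,
    intervalIntegral.integral_sub hmi.intervalIntegrable intervalIntegrable_const,
    intervalIntegral.integral_const, smul_eq_mul, sub_zero]
  ring

lemma abs_sub_le_of_bloch {Bmax cτ κ : ℝ} (hτ : 0 ≤ τ) (hcτ : 0 < cτ)
    (hB : ∀ i, IntervalIntegrable (fun t => B t i) volume 0 τ)
    (hBmax : ∀ t, enorm3 (B t) ≤ Bmax)
    (hm : ContinuousOn m (Set.uIcc 0 τ)) (hm' : ∀ i, IntervalIntegrable (fun t => m' t i) volume 0 τ)
    (heq : ∀ t ∈ Set.Ioo (0:ℝ) τ,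
      m' t = crossProduct (m t) (γ • B t) - fun i => Θ i * (m t i - me i))
    (hmδ : ContinuousOn mδ (Set.uIcc 0 τ))
    (hmδ' : ∀ i, IntervalIntegrable (fun t => mδ' t i) volume 0 τ)
    (heqδ : ∀ t ∈ Set.Ioo (0:ℝ) τ,
      mδ' t = crossProduct (mδ t) (γ • B t) - fun i => Θδ i * (mδ t i - me i))
    {i : Fin 3} (hc : cτ ≤ |(∫ t in (0:ℝ)..τ, m t i) - τ * me i|) (hκ : |Θδ i| ≤ κ) :
    |Θ i - Θδ i| ≤ (|γ| * Bmax + κ + 1) / cτ * ((∫ t in (0:ℝ)..τ, enorm3 (m t - mδ t))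
      + ∫ t in (0:ℝ)..τ, enorm3 (m' t - mδ' t)) := by
  have hcont : ∀ {f : ℝ → Fin 3 → ℝ}, ContinuousOn f (Set.uIcc 0 τ) →
      ∀ j, IntervalIntegrable (fun t => f t j) volume 0 τ := fun hf j =>
    ((continuous_apply j).comp_continuousOn hf).intervalIntegrable
  have hXint : IntervalIntegrable (fun t => enorm3 (m t - mδ t)) volume 0 τ :=
    intervalIntegrable_enorm3 fun j => (hcont hm j).sub (hcont hmδ j)
  have hN := abs_integral_sub_integral_le hτ (intervalIntegrable_crossProduct_apply hB hm i)
    (intervalIntegrable_crossProduct_apply hB hmδ i) (hXint.const_mul (|γ| * Bmax))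
    fun t _ => (abs_crossProduct_apply_sub_le (m t) (mδ t) (B t) γ i).trans <| by
      gcongr
      · exact enorm3_nonneg _
      · exact hBmax t
  have hP := abs_integral_sub_integral_le hτ (hm' i) (hmδ' i)
    (h := fun t => enorm3 (m' t - mδ' t))
    (intervalIntegrable_enorm3 fun j => (hm' j).sub (hmδ' j))
    fun t _ => abs_apply_le_enorm3 (m' t - mδ' t) i
  have hD := abs_integral_sub_integral_le hτ (hcont hm i) (hcont hmδ i) hXint
    fun t _ => abs_apply_le_enorm3 (m t - mδ t) i
  have key := abs_sub_mul_le_of_mul_eq_sub (mul_integral_sub_eq_of_bloch hτ hB hm heq i)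
    (mul_integral_sub_eq_of_bloch hτ hB hmδ heqδ i) hc hκ
  rw [intervalIntegral.integral_const_mul] at hN
  rw [sub_sub_sub_cancel_right] at key
  have hκ0 : 0 ≤ κ := (abs_nonneg _).trans hκ
  have hBmax0 : 0 ≤ Bmax := (enorm3_nonneg _).trans (hBmax 0)
  have hX : 0 ≤ ∫ t in (0:ℝ)..τ, enorm3 (m t - mδ t) :=
    intervalIntegral.integral_nonneg hτ fun t _ => enorm3_nonneg _
  have hY : 0 ≤ ∫ t in (0:ℝ)..τ, enorm3 (m' t - mδ' t) :=
    intervalIntegral.integral_nonneg hτ fun t _ => enorm3_nonneg _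
  rw [div_mul_eq_mul_div, le_div_iff₀ hcτ]
  nlinarith [mul_le_mul_of_nonneg_left hD hκ0, mul_nonneg (mul_nonneg (abs_nonneg γ) hBmax0) hY]

end Bloch

/-- Stability of the inversion of the Bloch mapping: under the nondegeneracy condition
there is a constant `C` (depending only on `τ, a, b, γ, Bmax, cτ`, not on the trajectories)
such that `‖θ − θᵟ‖ ≤ C (∫₀^τ ‖m − mᵟ‖ + ∫₀^τ ‖m' − (mᵟ)'‖)`. -/
theorem stmt3 (τ : ℝ) (hτ : 0 < τ) (γ a b Bmax cτ : ℝ)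
    (ha : 0 < a) (hab : a ≤ b) (hBmax : 0 < Bmax) (hcτ : 0 < cτ) :
    ∃ C > 0, ∀ (B : ℝ → Fin 3 → ℝ),
      (∀ i, IntervalIntegrable (fun t => B t i) volume 0 τ) →
      (∀ t, enorm3 (B t) ≤ Bmax) →
      ∀ (θ θδ : ℝ × ℝ),
        θ.1 ∈ Set.Icc a b → θ.2 ∈ Set.Icc a b →
        θδ.1 ∈ Set.Icc a b → θδ.2 ∈ Set.Icc a b →
      ∀ (m m' mδ mδ' : ℝ → Fin 3 → ℝ),
        (∀ t ∈ Set.Icc (0:ℝ) τ, HasDerivAt m (m' t) t) →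
        (∀ i, IntervalIntegrable (fun t => m' t i) volume 0 τ) →
        (∀ t ∈ Set.Ioo (0:ℝ) τ,
          m' t = crossProduct (m t) (γ • B t) - fun i => relax θ i * (m t i - me i)) →
        (∀ t ∈ Set.Icc (0:ℝ) τ, HasDerivAt mδ (mδ' t) t) →
        (∀ i, IntervalIntegrable (fun t => mδ' t i) volume 0 τ) →
        (∀ t ∈ Set.Ioo (0:ℝ) τ,
          mδ' t = crossProduct (mδ t) (γ • B t) - fun i => relax θδ i * (mδ t i - me i)) →
        (∀ i : Fin 3, cτ ≤ |(∫ t in (0:ℝ)..τ, m t i) - τ * me i|) →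
        (∀ i : Fin 3, cτ ≤ |(∫ t in (0:ℝ)..τ, mδ t i) - τ * me i|) →
        enorm2 (θ - θδ)
          ≤ C * ((∫ t in (0:ℝ)..τ, enorm3 (m t - mδ t))
                 + ∫ t in (0:ℝ)..τ, enorm3 (m' t - mδ' t)) := by
  have hb : 0 < b := ha.trans_le hab
  refine ⟨2 * b ^ 2 * ((|γ| * Bmax + 1 / a + 1) / cτ), by positivity, ?_⟩
  intro B hB hBle θ θδ hθ1 hθ2 hθδ1 hθδ2 m m' mδ mδ' hm hm' heq hmδ hmδ' heqδ hc _
  rw [← Set.uIcc_of_le hτ.le] at hm hmδ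
  have hrelax (i : Fin 3) := abs_sub_le_of_bloch hτ.le hcτ hB hBle (HasDerivAt.continuousOn hm)
    hm' heq (HasDerivAt.continuousOn hmδ) hmδ' heqδ (hc i) (abs_relax_le ha hθδ1.1 hθδ2.1 i)
  have hT1 : |θ.1 - θδ.1| ≤ b ^ 2 * |relax θ 2 - relax θδ 2| :=
    abs_sub_le_sq_mul_abs_one_div_sub ha hθ1 hθδ1
  have hT2 : |θ.2 - θδ.2| ≤ b ^ 2 * |relax θ 0 - relax θδ 0| :=
    abs_sub_le_sq_mul_abs_one_div_sub ha hθ2 hθδ2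
  refine (enorm2_le_abs_add_abs _).trans ?_
  rw [Prod.fst_sub, Prod.snd_sub]
  nlinarith [mul_le_mul_of_nonneg_left (hrelax 2) (sq_nonneg b),
    mul_le_mul_of_nonneg_left (hrelax 0) (sq_nonneg b)]
end

section
/- Let TR₁>0, α₁∈(0,π), φ₁∈ℝ, M_e=(0,0,1)ᵀ, and let M₀=−M_e (or M₀=M_e). Consider the first step of the IR-bSSFP discrete Bloch dynamics, M₁(θ) = E₁(TR₁,θ)R_{φ₁}R_x(α₁)R_{φ₁}ᵀM₀ + E₂(TR₁,θ)M_e, as a map from (0,∞)² to ℝ³. Then M₁ is injective: for θᵃ=(T₁ᵃ,T₂ᵃ) and θᵇ=(T₁ᵇ,T₂ᵇ) in (0,∞)², M₁(θᵃ)=M₁(θᵇ) implies θᵃ=θᵇ. Consequently, for any L≥1, flip angles {α_ℓ}⊂(0,π) and repetition times {TR_ℓ>0}, the map θ ↦ (M_1(θ),…,M_L(θ)) is injective on (0,∞)². -/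
open Matrix

/-- The equilibrium magnetization `M_e = (0,0,1)`. -/
noncomputable def Me : Fin 3 → ℝ := ![0, 0, 1]

/-- `E₁(TR,θ) = diag(e^{−TR/T₂}, e^{−TR/T₂}, e^{−TR/T₁})`. -/
noncomputable def E1 (TR T1 T2 : ℝ) : Matrix (Fin 3) (Fin 3) ℝ :=
  Matrix.diagonal ![Real.exp (-TR / T2), Real.exp (-TR / T2), Real.exp (-TR / T1)]

/-- `E₂(TR,θ) = 1 − e^{−TR/T₁}`. -/
noncomputable def E2 (TR T1 : ℝ) : ℝ := 1 - Real.exp (-TR / T1)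

/-- The phase-shift rotation `R_φ`. -/
noncomputable def Rphi (φ : ℝ) : Matrix (Fin 3) (Fin 3) ℝ :=
  !![Real.cos φ, Real.sin φ, 0; -Real.sin φ, Real.cos φ, 0; 0, 0, 1]

/-- The flip-angle rotation `R_x(α)`. -/
noncomputable def Rx (α : ℝ) : Matrix (Fin 3) (Fin 3) ℝ :=
  !![1, 0, 0; 0, Real.cos α, Real.sin α; 0, -Real.sin α, Real.cos α]

/-- `R(α) := R_φ R_x(α) R_φᵀ`. -/
noncomputable def Rmat (φ α : ℝ) : Matrix (Fin 3) (Fin 3) ℝ := Rphi φ * Rx α * (Rphi φ)ᵀ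

/-- The IR-bSSFP discrete Bloch dynamics:
`M₀` given, `M_ℓ = E₁(TR_ℓ,θ) R(α_ℓ) M_{ℓ−1} + E₂(TR_ℓ,θ) M_e`. -/
noncomputable def Mseq (α φ TR : ℕ → ℝ) (T1 T2 : ℝ) (M0 : Fin 3 → ℝ) : ℕ → Fin 3 → ℝ
  | 0 => M0
  | ℓ + 1 =>
      (E1 (TR (ℓ + 1)) T1 T2 * Rmat (φ (ℓ + 1)) (α (ℓ + 1))) *ᵥ Mseq α φ TR T1 T2 M0 ℓ
        + E2 (TR (ℓ + 1)) T1 • Me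

/-!
With `eᵢ = exp (-TR₁ / Tᵢ)` and `M₀ = s • M_e` (`s = ±1`), the first step is
`M₁ = (s e₂ sin φ₁ sin α₁, s e₂ cos φ₁ sin α₁, 1 + e₁ (s cos α₁ - 1))`.
Since `sin α₁ ≠ 0` and `|cos α₁| < 1`, these components determine `e₁` and `e₂`, and
`T ↦ exp (-TR / T)` is injective for `TR ≠ 0`. So `M₁` alone already determines `θ`.
-/

open Real

theorem exp_neg_div_injective {TR : ℝ} (hTR : TR ≠ 0) :
    Function.Injective fun T : ℝ => exp (-TR / T) := by
  intro T T' h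
  have h' : -TR * T⁻¹ = -TR * T'⁻¹ := by simpa only [div_eq_mul_inv] using exp_injective h
  exact inv_injective (mul_left_cancel₀ (neg_ne_zero.mpr hTR) h')

theorem relaxation_apply (TR T1 T2 : ℝ) (v : Fin 3 → ℝ) :
    E1 TR T1 T2 *ᵥ v + E2 TR T1 • Me =
      ![exp (-TR / T2) * v 0, exp (-TR / T2) * v 1, 1 + exp (-TR / T1) * (v 2 - 1)] := by
  ext i
  fin_cases i <;> simp [E1, E2, Me, mulVec_diagonal]; ring

theorem relaxation_injective {TR : ℝ} (hTR : TR ≠ 0) {v : Fin 3 → ℝ}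
    (hv : v 0 ≠ 0 ∨ v 1 ≠ 0) (hv2 : v 2 ≠ 1) :
    Function.Injective fun θ : ℝ × ℝ => E1 TR θ.1 θ.2 *ᵥ v + E2 TR θ.1 • Me := by
  rintro ⟨T1, T2⟩ ⟨T1', T2'⟩ h
  simp only [relaxation_apply] at h
  have h0 := congrFun h 0
  have h1 := congrFun h 1
  have h2 := congrFun h 2
  simp only [Matrix.cons_val_zero, Matrix.cons_val_one, Matrix.cons_val_two] at h0 h1 h2
  have hT1 : T1 = T1' := exp_neg_div_injective hTR <|
    mul_right_cancel₀ (sub_ne_zero.mpr hv2) (add_left_cancel h2)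
  have hT2 : T2 = T2' := exp_neg_div_injective hTR <| by
    rcases hv with hv | hv
    · exact mul_right_cancel₀ hv h0
    · exact mul_right_cancel₀ hv h1
  rw [hT1, hT2]

theorem Rmat_mulVec_Me (φ α : ℝ) :
    Rmat φ α *ᵥ Me = ![sin φ * sin α, cos φ * sin α, cos α] := by
  rw [Rmat, ← mulVec_mulVec, ← mulVec_mulVec]
  ext i
  fin_cases i <;> simp [Rphi, Rx, Me, mulVec, dotProduct, Fin.sum_univ_three]

theorem Mseq_one (α φ TR : ℕ → ℝ) (T1 T2 : ℝ) (M0 : Fin 3 → ℝ) :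
    Mseq α φ TR T1 T2 M0 1 =
      E1 (TR 1) T1 T2 *ᵥ (Rmat (φ 1) (α 1) *ᵥ M0) + E2 (TR 1) T1 • Me := by
  rw [mulVec_mulVec]
  rfl

theorem sin_ne_zero_or_cos_ne_zero (φ : ℝ) : sin φ ≠ 0 ∨ cos φ ≠ 0 := by
  by_contra! h
  simpa [h.1, h.2] using sin_sq_add_cos_sq φ

theorem Mseq_one_smul_Me_injective {α φ TR : ℕ → ℝ} (hTR : TR 1 ≠ 0) (hα : sin (α 1) ≠ 0)
    {s : ℝ} (hs : s ≠ 0) (hsα : s * cos (α 1) ≠ 1) :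
    Function.Injective fun θ : ℝ × ℝ => Mseq α φ TR θ.1 θ.2 (s • Me) 1 := by
  simp only [Mseq_one, mulVec_smul (Rmat _ _), Rmat_mulVec_Me]
  apply relaxation_injective hTR
  · rcases sin_ne_zero_or_cos_ne_zero (φ 1) with hφ | hφ
    · exact Or.inl (by simp [hs, hφ, hα])
    · exact Or.inr (by simp [hs, hφ, hα])
  · simpa using hsα

/-- Injectivity of the first IR-bSSFP step `θ ↦ M₁(θ)` on `(0,∞)²` for `M₀ = ±M_e` and
`α₁ ∈ (0,π)`, and consequently injectivity of the full map `θ ↦ (M₁(θ),…,M_L(θ))`. -/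
theorem stmt9 (TR α φ : ℕ → ℝ) (hTR : ∀ ℓ, 0 < TR ℓ)
    (hα : ∀ ℓ, α ℓ ∈ Set.Ioo 0 Real.pi)
    (M0 : Fin 3 → ℝ) (hM0 : M0 = -Me ∨ M0 = Me) (L : ℕ) (hL : 1 ≤ L) :
    (∀ T1a T2a T1b T2b : ℝ, 0 < T1a → 0 < T2a → 0 < T1b → 0 < T2b →
        Mseq α φ TR T1a T2a M0 1 = Mseq α φ TR T1b T2b M0 1 →
        (T1a, T2a) = (T1b, T2b))
    ∧ (∀ T1a T2a T1b T2b : ℝ, 0 < T1a → 0 < T2a → 0 < T1b → 0 < T2b →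
        (∀ ℓ ∈ Finset.Icc 1 L, Mseq α φ TR T1a T2a M0 ℓ = Mseq α φ TR T1b T2b M0 ℓ) →
        (T1a, T2a) = (T1b, T2b)) := by
  obtain ⟨s, hs, rfl⟩ : ∃ s : ℝ, (s = -1 ∨ s = 1) ∧ M0 = s • Me := by
    rcases hM0 with rfl | rfl
    exacts [⟨-1, Or.inl rfl, by simp⟩, ⟨1, Or.inr rfl, by simp⟩]
  have hsin : 0 < sin (α 1) := sin_pos_of_pos_of_lt_pi (hα 1).1 (hα 1).2
  have hsα : s * cos (α 1) ≠ 1 := fun h => by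
    rcases hs with rfl | rfl <;> nlinarith [sin_sq_add_cos_sq (α 1)]
  have hinj := Mseq_one_smul_Me_injective (φ := φ) (hTR 1).ne' hsin.ne'
    (by rcases hs with rfl | rfl <;> norm_num) hsα
  exact ⟨fun _ _ _ _ _ _ _ _ h => hinj h,
    fun _ _ _ _ _ _ _ _ h => hinj (h 1 (Finset.mem_Icc.mpr ⟨le_rfl, hL⟩))⟩
end

section
/- Let TR₁>0, TR₂>0, λ∈(0,1), and let a, b, c > 0. If both λ·e^{−TR₁/a} + (1−λ)·e^{−TR₁/b} = e^{−TR₁/c} and λ·e^{−(TR₁+TR₂)/a} + (1−λ)·e^{−(TR₁+TR₂)/b} = e^{−(TR₁+TR₂)/c} hold, then a = b = c. Consequently, for positive reals T₁ᵃ,T₂ᵃ,T₁ᵇ,T₂ᵇ,T₁^λ,T₂^λ satisfying the system λe^{−TR₁/T₁ᵃ}+(1−λ)e^{−TR₁/T₁ᵇ}=e^{−TR₁/T₁^λ}, λe^{−TR₁/T₂ᵃ}+(1−λ)e^{−TR₁/T₂ᵇ}=e^{−TR₁/T₂^λ}, λe^{−(TR₂+TR₁)/T₁ᵃ}+(1−λ)e^{−(TR₂+TR₁)/T₁ᵇ}=e^{−(TR₂+TR₁)/T₁^λ},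 λe^{−(TR₂+TR₁)/T₂ᵃ}+(1−λ)e^{−(TR₂+TR₁)/T₂ᵇ}=e^{−(TR₂+TR₁)/T₂^λ}, and λe^{−TR₁/T₂ᵃ}e^{−TR₂/T₁ᵃ}+(1−λ)e^{−TR₁/T₂ᵇ}e^{−TR₂/T₁ᵇ}=e^{−TR₁/T₂^λ}e^{−TR₂/T₁^λ}, one has T₁ᵃ=T₁ᵇ=T₁^λ and T₂ᵃ=T₂ᵇ=T₂^λ. -/
/-!
Put `x = e^{-TR₁/a}`, `y = e^{-TR₁/b}`, `z = e^{-TR₁/c}` and `r = (TR₁ + TR₂)/TR₁ > 1`.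
Then `e^{-(TR₁+TR₂)/t} = (e^{-TR₁/t})^r`, so the two equations say `z = λx + (1-λ)y` and
`z^r = λx^r + (1-λ)y^r`: equality in Jensen's inequality for the strictly convex `t ↦ t^r`,
which forces `x = y`, hence `z = x`. As `t ↦ e^{-TR₁/t}` is injective, `a = b = c`.
The five-equation system is two instances of this, one for `T₁` and one for `T₂`.
-/

theorem StrictConvexOn.eq_of_map_add_eq {𝕜 E β : Type*} [Semiring 𝕜] [PartialOrder 𝕜]
    [AddCommMonoid E] [AddCommMonoid β] [PartialOrder β] [SMul 𝕜 E] [SMul 𝕜 β]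
    {s : Set E} {f : E → β} (hf : StrictConvexOn 𝕜 s f) {x y : E} (hx : x ∈ s)
    (hy : y ∈ s) {a b : 𝕜} (ha : 0 < a) (hb : 0 < b) (hab : a + b = 1)
    (h : f (a • x + b • y) = a • f x + b • f y) : x = y :=
  by_contra fun hxy => (hf.2 hx hy hxy ha hb hab).ne h

namespace Real

lemma exp_neg_div_eq_rpow (u : ℝ) {s : ℝ} (hs : s ≠ 0) (t : ℝ) :
    exp (-u / t) = exp (-s / t) ^ (u / s) := by
  rw [← exp_mul]
  congr 1
  field_simp

lemma exp_neg_div_injective {s : ℝ} (hs : s ≠ 0) :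
    Function.Injective fun t : ℝ ↦ exp (-s / t) := by
  intro a b h
  have h' : -s * a⁻¹ = -s * b⁻¹ := exp_injective h
  exact inv_injective (mul_left_cancel₀ (neg_ne_zero.2 hs) h')

theorem eq_and_eq_of_exp_neg_div_convex_combination {TR1 TR2 lam : ℝ} (hTR1 : 0 < TR1)
    (hTR2 : 0 < TR2) (hlam0 : 0 < lam) (hlam1 : lam < 1) {a b c : ℝ}
    (h1 : lam * exp (-TR1 / a) + (1 - lam) * exp (-TR1 / b) = exp (-TR1 / c))
    (h2 : lam * exp (-(TR1 + TR2) / a) + (1 - lam) * exp (-(TR1 + TR2) / b)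
        = exp (-(TR1 + TR2) / c)) :
    a = b ∧ b = c := by
  have hr : 1 < (TR1 + TR2) / TR1 := by rw [one_lt_div hTR1]; linarith
  simp only [exp_neg_div_eq_rpow (TR1 + TR2) hTR1.ne'] at h2
  have hxy : exp (-TR1 / a) = exp (-TR1 / b) := by
    refine (strictConvexOn_rpow hr).eq_of_map_add_eq (exp_pos _).le (exp_pos _).le hlam0
      (sub_pos.2 hlam1) (add_sub_cancel lam 1) ?_
    simp only [smul_eq_mul, h1, h2.symm]
  have hab : a = b := exp_neg_div_injective hTR1.ne' hxy
  subst hab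
  refine ⟨rfl, exp_neg_div_injective hTR1.ne' ?_⟩
  simp only [← h1]
  ring

end Real

/-- Rigidity of convex combinations of exponentials: if
`λ e^{−TR₁/a} + (1−λ) e^{−TR₁/b} = e^{−TR₁/c}` and the same holds with `TR₁` replaced by
`TR₁ + TR₂`, then `a = b = c`; consequently the five-equation system arising from convex
combinations of IR-bSSFP Bloch trajectories forces `T₁ᵃ = T₁ᵇ = T₁^λ` and
`T₂ᵃ = T₂ᵇ = T₂^λ`. -/
theorem stmt12 (TR1 TR2 lam : ℝ) (hTR1 : 0 < TR1) (hTR2 : 0 < TR2)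
    (hlam0 : 0 < lam) (hlam1 : lam < 1) :
    (∀ a b c : ℝ, 0 < a → 0 < b → 0 < c →
      lam * Real.exp (-TR1 / a) + (1 - lam) * Real.exp (-TR1 / b) = Real.exp (-TR1 / c) →
      lam * Real.exp (-(TR1 + TR2) / a) + (1 - lam) * Real.exp (-(TR1 + TR2) / b)
        = Real.exp (-(TR1 + TR2) / c) →
      a = b ∧ b = c)
    ∧ (∀ T1a T2a T1b T2b T1l T2l : ℝ,
        0 < T1a → 0 < T2a → 0 < T1b → 0 < T2b → 0 < T1l → 0 < T2l →
        lam * Real.exp (-TR1 / T1a) + (1 - lam) * Real.exp (-TR1 / T1b)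
          = Real.exp (-TR1 / T1l) →
        lam * Real.exp (-TR1 / T2a) + (1 - lam) * Real.exp (-TR1 / T2b)
          = Real.exp (-TR1 / T2l) →
        lam * Real.exp (-(TR2 + TR1) / T1a) + (1 - lam) * Real.exp (-(TR2 + TR1) / T1b)
          = Real.exp (-(TR2 + TR1) / T1l) →
        lam * Real.exp (-(TR2 + TR1) / T2a) + (1 - lam) * Real.exp (-(TR2 + TR1) / T2b)
          = Real.exp (-(TR2 + TR1) / T2l) →
        lam * (Real.exp (-TR1 / T2a) * Real.exp (-TR2 / T1a))
            + (1 - lam) * (Real.exp (-TR1 / T2b) * Real.exp (-TR2 / T1b))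
          = Real.exp (-TR1 / T2l) * Real.exp (-TR2 / T1l) →
        (T1a = T1b ∧ T1b = T1l) ∧ (T2a = T2b ∧ T2b = T2l)) := by
  have rigid := @Real.eq_and_eq_of_exp_neg_div_convex_combination TR1 TR2 lam hTR1 hTR2 hlam0 hlam1
  refine ⟨fun a b c _ _ _ ↦ rigid, ?_⟩
  intro T1a T2a T1b T2b T1l T2l _ _ _ _ _ _ e1 e2 e3 e4 _
  rw [add_comm TR2 TR1] at e3 e4
  exact ⟨rigid e1 e3, rigid e2 e4⟩
end

section
/- Let p ≤ d and L ≥ 1 be natural numbers, 0 < c ≤ C, and let A₁,…,A_L ∈ ℝ^{d×p} each have rank p with all singular values in [√c, √C] (equivalently, c‖x‖² ≤ ‖A_ℓ x‖² ≤ C‖x‖² for all x∈ℝᵖ and all ℓ). Let ζ*∈ℝᵖ and b_ℓ = A_ℓ ζ* for all ℓ, and let A ∈ ℝ^{Ld×p} and b ∈ ℝ^{Ld} be the vertical stacks of the A_ℓ and b_ℓ. Let δ be a random vector in ℝ^{Ld} whose Ld components are independent, each with mean 0 and variance σ². Define the least-squares estimator ζ_ls := (AᵀA)^{−1}Aᵀ(b+δ).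 Then for every ε>0: ℙ( ‖ζ_ls − ζ*‖ > ε ) ≤ σ²·p / (c·L·ε²). In particular the failure probability is of order O(p/L)·σ²/ε². -/
/-!
With `M = AᵀA = ∑ₗ Aₗᵀ Aₗ`, the lower singular-value bound gives `xᵀ M x ≥ c L ‖x‖²`, so `M` is
invertible and every diagonal entry of `M⁻¹` is at most `1 / (c L)`. The estimation error
`ζ_ls - ζ* = M⁻¹ Aᵀ δ` is linear in the noise, so independence gives
`E ‖ζ_ls - ζ*‖² = σ² ∑ (M⁻¹Aᵀ)ᵢⱼ² = σ² tr (M⁻¹ M M⁻ᵀ) = σ² tr M⁻¹ ≤ σ² p / (c L)`,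
and Markov's inequality for `‖ζ_ls - ζ*‖²` finishes the proof.
-/

open MeasureTheory ProbabilityTheory Matrix

section Probability

variable {Ω ι : Type*} [MeasurableSpace Ω] {μ : Measure Ω}

theorem measure_lt_sqrt_sum_sq_le [Fintype ι] {Y : ι → Ω → ℝ} (hY : ∀ j, MemLp (Y j) 2 μ)
    {ε : ℝ} (hε : 0 < ε) :
    μ {ω | ε < √(∑ j, Y j ω ^ 2)} ≤ ENNReal.ofReal ((∑ j, ∫ ω, Y j ω ^ 2 ∂μ) / ε ^ 2) := by
  have hint : Integrable (fun ω => ∑ j, Y j ω ^ 2) μ :=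
    integrable_finsetSum _ fun j _ => (hY j).integrable_sq
  have hnonneg : 0 ≤ᵐ[μ] fun ω => ∑ j, Y j ω ^ 2 :=
    ae_of_all _ fun ω => Finset.sum_nonneg fun j _ => sq_nonneg _
  calc μ {ω | ε < √(∑ j, Y j ω ^ 2)}
      ≤ μ {ω | ENNReal.ofReal (ε ^ 2) ≤ ENNReal.ofReal (∑ j, Y j ω ^ 2)} :=
        measure_mono fun ω hω => ENNReal.ofReal_le_ofReal ((Real.lt_sqrt hε.le).1 hω).le
    _ ≤ (∫⁻ ω, ENNReal.ofReal (∑ j, Y j ω ^ 2) ∂μ) / ENNReal.ofReal (ε ^ 2) :=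
        meas_ge_le_lintegral_div hint.aemeasurable.ennreal_ofReal (by simp [hε.ne'])
          ENNReal.ofReal_ne_top
    _ = ENNReal.ofReal ((∑ j, ∫ ω, Y j ω ^ 2 ∂μ) / ε ^ 2) := by
        rw [← ofReal_integral_eq_lintegral_ofReal hint hnonneg,
          ← ENNReal.ofReal_div_of_pos (by positivity),
          integral_finsetSum _ fun j _ => (hY j).integrable_sq]

theorem integral_sq_sum_mul_of_pairwise_indepFun [IsFiniteMeasure μ] [Fintype ι]
    {δ : ι → Ω → ℝ} (hL2 : ∀ i, MemLp (δ i) 2 μ) (hindep : Pairwise fun i j => δ i ⟂ᵢ[μ] δ j)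
    {σ : ℝ} (hmean : ∀ i, ∫ ω, δ i ω ∂μ = 0) (hvar : ∀ i, ∫ ω, δ i ω ^ 2 ∂μ = σ ^ 2)
    (a : ι → ℝ) :
    ∫ ω, (∑ i, a i * δ i ω) ^ 2 ∂μ = σ ^ 2 * ∑ i, a i ^ 2 := by
  have hX : ∀ i, MemLp (fun ω => a i * δ i ω) 2 μ := fun i => (hL2 i).const_mul (a i)
  have hsum : (fun ω => ∑ i, a i * δ i ω) = ∑ i, fun ω => a i * δ i ω := by
    funext ω; simp
  have hcentred : ∫ ω, ∑ i, a i * δ i ω ∂μ = 0 := by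
    simp [integral_finsetSum _ fun i _ => (hX i).integrable one_le_two, integral_const_mul,
      hmean]
  calc ∫ ω, (∑ i, a i * δ i ω) ^ 2 ∂μ
      = Var[fun ω => ∑ i, a i * δ i ω; μ] :=
        (variance_of_integral_eq_zero (memLp_finsetSum _ fun i _ => hX i).aemeasurable
          hcentred).symm
    _ = ∑ i, Var[fun ω => a i * δ i ω; μ] := by
        rw [hsum]
        exact IndepFun.variance_sum (fun i _ => hX i) fun i _ j _ hij =>
          (hindep hij).comp (measurable_const_mul (a i)) (measurable_const_mul (a j))
    _ = σ ^ 2 * ∑ i, a i ^ 2 := by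
        simp_rw [variance_const_mul, variance_of_integral_eq_zero (hL2 _).aemeasurable (hmean _),
          hvar, Finset.mul_sum, mul_comm]

end Probability

section LinearAlgebra

variable {κ m n : Type*} [Fintype κ] [Fintype m] [Fintype n]

theorem mul_dotProduct_le_dotProduct_sum_transpose_mul_mulVec (A : κ → Matrix m n ℝ) {c : ℝ}
    (hA : ∀ ℓ, ∀ x : n → ℝ, c * ∑ j, x j ^ 2 ≤ ∑ i, (A ℓ *ᵥ x) i ^ 2) (x : n → ℝ) :
    (c * Fintype.card κ) * (x ⬝ᵥ x) ≤ x ⬝ᵥ (∑ ℓ, (A ℓ)ᵀ * A ℓ) *ᵥ x := by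
  calc (c * Fintype.card κ) * (x ⬝ᵥ x) = ∑ _ℓ : κ, c * ∑ j, x j ^ 2 := by
        simp [dotProduct, sq, Finset.sum_const, Finset.card_univ]; ring
    _ ≤ ∑ ℓ, ∑ i, (A ℓ *ᵥ x) i ^ 2 := Finset.sum_le_sum fun ℓ _ => hA ℓ x
    _ = x ⬝ᵥ (∑ ℓ, (A ℓ)ᵀ * A ℓ) *ᵥ x := by
        rw [sum_mulVec, dotProduct_sum]
        refine Finset.sum_congr rfl fun ℓ _ => ?_
        rw [← mulVec_mulVec, dotProduct_mulVec, vecMul_transpose]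
        simp [dotProduct, sq]

variable [DecidableEq n]

section Coercive

variable {M : Matrix n n ℝ} {c : ℝ}

theorem isUnit_det_of_mul_dotProduct_le (hc : 0 < c) (hM : ∀ x, c * (x ⬝ᵥ x) ≤ x ⬝ᵥ M *ᵥ x) :
    IsUnit M.det := by
  refine isUnit_iff_ne_zero.2 fun hdet => ?_
  obtain ⟨v, hv, hMv⟩ := exists_mulVec_eq_zero_iff.2 hdet
  have hpos : 0 < v ⬝ᵥ v :=
    lt_of_le_of_ne (Finset.sum_nonneg fun i _ => mul_self_nonneg (v i))
      (Ne.symm (dotProduct_self_eq_zero.not.2 hv))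
  have := hM v
  rw [hMv, dotProduct_zero] at this
  nlinarith

theorem inv_apply_self_le_of_mul_dotProduct_le (hc : 0 < c)
    (hM : ∀ x, c * (x ⬝ᵥ x) ≤ x ⬝ᵥ M *ᵥ x) (j : n) : M⁻¹ j j ≤ c⁻¹ := by
  set x := M⁻¹ *ᵥ Pi.single j 1
  have hxj : x j = M⁻¹ j j := by simp [x, mulVec_single]
  have hquad : x ⬝ᵥ M *ᵥ x = x j := by
    rw [mulVec_mulVec, mul_nonsing_inv _ (isUnit_det_of_mul_dotProduct_le hc hM), one_mulVec,
      dotProduct_single, mul_one]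
  have hsq : c * x j ^ 2 ≤ x j := by
    calc c * x j ^ 2 ≤ c * (x ⬝ᵥ x) := by
          gcongr
          simpa [dotProduct, sq] using
            Finset.single_le_sum (fun k _ => mul_self_nonneg (x k)) (Finset.mem_univ j)
      _ ≤ x j := hquad ▸ hM x
  rw [← hxj]
  rcases le_or_gt (x j) 0 with hneg | hpos
  · exact hneg.trans (inv_pos.2 hc).le
  · rw [inv_eq_one_div, le_div_iff₀ hc]
    nlinarith

theorem trace_inv_le_of_mul_dotProduct_le (hc : 0 < c) (hM : ∀ x, c * (x ⬝ᵥ x) ≤ x ⬝ᵥ M *ᵥ x) :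
    M⁻¹.trace ≤ Fintype.card n / c := by
  calc M⁻¹.trace ≤ ∑ _j : n, c⁻¹ :=
        Finset.sum_le_sum fun j _ => inv_apply_self_le_of_mul_dotProduct_le hc hM j
    _ = Fintype.card n / c := by simp [div_eq_mul_inv]

end Coercive

theorem inv_mulVec_sum_transpose_mulVec_sub {A : κ → Matrix m n ℝ}
    (hA : IsUnit (∑ ℓ, (A ℓ)ᵀ * A ℓ).det) (ζ : n → ℝ) (w : κ → m → ℝ) :
    (∑ ℓ, (A ℓ)ᵀ * A ℓ)⁻¹ *ᵥ (∑ ℓ, (A ℓ)ᵀ *ᵥ (A ℓ *ᵥ ζ + w ℓ)) - ζ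
      = ∑ ℓ, ((∑ ℓ, (A ℓ)ᵀ * A ℓ)⁻¹ * (A ℓ)ᵀ) *ᵥ w ℓ := by
  simp_rw [mulVec_add, mulVec_mulVec, Finset.sum_add_distrib, ← sum_mulVec, mulVec_add,
    mulVec_mulVec, nonsing_inv_mul _ hA, one_mulVec, add_sub_cancel_left, mulVec_sum,
    mulVec_mulVec]

theorem sum_sum_sq_inv_mul_transpose_apply {A : κ → Matrix m n ℝ}
    (hA : IsUnit (∑ ℓ, (A ℓ)ᵀ * A ℓ).det) (j : n) :
    ∑ ℓ, ∑ i, ((∑ ℓ, (A ℓ)ᵀ * A ℓ)⁻¹ * (A ℓ)ᵀ) j i ^ 2 = (∑ ℓ, (A ℓ)ᵀ * A ℓ)⁻¹ j j := by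
  set M := ∑ ℓ, (A ℓ)ᵀ * A ℓ
  -- no symmetry of `M` is needed: `M⁻¹ᵀ` has the same diagonal as `M⁻¹`
  have hgram : ∑ ℓ, (M⁻¹ * (A ℓ)ᵀ) * (M⁻¹ * (A ℓ)ᵀ)ᵀ = (M⁻¹)ᵀ := by
    calc ∑ ℓ, (M⁻¹ * (A ℓ)ᵀ) * (M⁻¹ * (A ℓ)ᵀ)ᵀ = ∑ ℓ, M⁻¹ * ((A ℓ)ᵀ * A ℓ) * (M⁻¹)ᵀ := by
          simp only [transpose_mul, transpose_transpose, Matrix.mul_assoc]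
      _ = (M⁻¹)ᵀ := by
          rw [← Finset.sum_mul, ← Matrix.mul_sum, nonsing_inv_mul _ hA, Matrix.one_mul]
  rw [← transpose_apply M⁻¹, ← hgram, Matrix.sum_apply]
  simp only [mul_apply, transpose_apply, sq]

end LinearAlgebra

theorem stmt13_general (p d L : ℕ) (hL : 1 ≤ L)
    (c : ℝ) (hc : 0 < c)
    (A : Fin L → Matrix (Fin d) (Fin p) ℝ)
    (hlow : ∀ ℓ, ∀ x : Fin p → ℝ, c * ∑ j, x j ^ 2 ≤ ∑ i, (A ℓ *ᵥ x) i ^ 2)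
    (ζs : Fin p → ℝ)
    (Ω : Type*) [MeasurableSpace Ω] (μ : Measure Ω) [IsProbabilityMeasure μ]
    (δ : Fin L × Fin d → Ω → ℝ)
    (hL2 : ∀ i, MemLp (δ i) 2 μ)
    (hindep : iIndepFun δ μ)
    (σ : ℝ)
    (hmean : ∀ i, ∫ ω, δ i ω ∂μ = 0)
    (hvar : ∀ i, ∫ ω, (δ i ω) ^ 2 ∂μ = σ ^ 2) :
    ∀ ε : ℝ, 0 < ε →
      μ {ω | ε < Real.sqrt (∑ j,
          (((∑ ℓ, (A ℓ)ᵀ * A ℓ)⁻¹ *ᵥ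
              (∑ ℓ, (A ℓ)ᵀ *ᵥ (A ℓ *ᵥ ζs + fun i => δ (ℓ, i) ω))) j - ζs j) ^ 2)}
        ≤ ENNReal.ofReal (σ ^ 2 * p / (c * L * ε ^ 2)) := by
  intro ε hε
  set M := ∑ ℓ, (A ℓ)ᵀ * A ℓ
  have hcL : 0 < c * L := mul_pos hc (by exact_mod_cast hL)
  have hcoer : ∀ x, (c * L) * (x ⬝ᵥ x) ≤ x ⬝ᵥ M *ᵥ x := by
    simpa using mul_dotProduct_le_dotProduct_sum_transpose_mul_mulVec A hlow
  have hM : IsUnit M.det := isUnit_det_of_mul_dotProduct_le hcL hcoer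
  set B : Fin p → Fin L × Fin d → ℝ := fun j q => (M⁻¹ * (A q.1)ᵀ) j q.2
  have herr : ∀ ω j, (M⁻¹ *ᵥ (∑ ℓ, (A ℓ)ᵀ *ᵥ (A ℓ *ᵥ ζs + fun i => δ (ℓ, i) ω))) j - ζs j
      = ∑ q, B j q * δ q ω := by
    intro ω j
    rw [← Pi.sub_apply, inv_mulVec_sum_transpose_mulVec_sub hM, Fintype.sum_prod_type]
    simp [B, M, mulVec, dotProduct]
  have hBsq : ∀ j, ∑ q, B j q ^ 2 = M⁻¹ j j := fun j => by
    rw [Fintype.sum_prod_type]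
    exact sum_sum_sq_inv_mul_transpose_apply hM j
  calc μ {ω | ε < √(∑ j, ((M⁻¹ *ᵥ
              (∑ ℓ, (A ℓ)ᵀ *ᵥ (A ℓ *ᵥ ζs + fun i => δ (ℓ, i) ω))) j - ζs j) ^ 2)}
      = μ {ω | ε < √(∑ j, (∑ q, B j q * δ q ω) ^ 2)} := by simp_rw [herr]
    _ ≤ ENNReal.ofReal ((∑ j, ∫ ω, (∑ q, B j q * δ q ω) ^ 2 ∂μ) / ε ^ 2) :=
        measure_lt_sqrt_sum_sq_le (fun j => memLp_finsetSum _ fun q _ => (hL2 q).const_mul _) hε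
    _ = ENNReal.ofReal (σ ^ 2 * M⁻¹.trace / ε ^ 2) := by
        simp_rw [integral_sq_sum_mul_of_pairwise_indepFun hL2
          (fun _ _ hij => hindep.indepFun hij) hmean hvar, hBsq, ← Finset.mul_sum]
        rfl
    _ ≤ ENNReal.ofReal (σ ^ 2 * p / (c * L * ε ^ 2)) := by
        have htrace : M⁻¹.trace ≤ p / (c * L) := by
          simpa using trace_inv_le_of_mul_dotProduct_le hcL hcoer
        rw [← div_div, mul_div_assoc _ (p : ℝ)]
        gcongr

/-- Chebyshev-type estimate for the stacked least-squares estimator: with `L` blocks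
`A_ℓ ∈ ℝ^{d×p}` of rank `p` whose singular values lie in `[√c, √C]`, exact data
`b_ℓ = A_ℓ ζ*`, and i.i.d.-type noise (independent components, mean `0`, variance `σ²`),
the least-squares solution `ζ_ls = (AᵀA)⁻¹Aᵀ(b+δ)` satisfies
`ℙ(‖ζ_ls − ζ*‖ > ε) ≤ σ² p / (c L ε²)`. -/
theorem stmt13 (p d L : ℕ) (hpd : p ≤ d) (hL : 1 ≤ L)
    (c Cb : ℝ) (hc : 0 < c) (hcC : c ≤ Cb)
    (A : Fin L → Matrix (Fin d) (Fin p) ℝ)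
    (hrank : ∀ ℓ, (A ℓ).rank = p)
    (hlow : ∀ ℓ, ∀ x : Fin p → ℝ, c * ∑ j, x j ^ 2 ≤ ∑ i, (A ℓ *ᵥ x) i ^ 2)
    (hup : ∀ ℓ, ∀ x : Fin p → ℝ, ∑ i, (A ℓ *ᵥ x) i ^ 2 ≤ Cb * ∑ j, x j ^ 2)
    (ζs : Fin p → ℝ)
    (Ω : Type*) [MeasurableSpace Ω] (μ : Measure Ω) [IsProbabilityMeasure μ]
    (δ : Fin L × Fin d → Ω → ℝ)
    (hmeas : ∀ i, Measurable (δ i))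
    (hL2 : ∀ i, MemLp (δ i) 2 μ)
    (hindep : iIndepFun δ μ)
    (σ : ℝ)
    (hmean : ∀ i, ∫ ω, δ i ω ∂μ = 0)
    (hvar : ∀ i, ∫ ω, (δ i ω) ^ 2 ∂μ = σ ^ 2) :
    ∀ ε : ℝ, 0 < ε →
      μ {ω | ε < Real.sqrt (∑ j,
          (((∑ ℓ, (A ℓ)ᵀ * A ℓ)⁻¹ *ᵥ
              (∑ ℓ, (A ℓ)ᵀ *ᵥ (A ℓ *ᵥ ζs + fun i => δ (ℓ, i) ω))) j - ζs j) ^ 2)}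
        ≤ ENNReal.ofReal (σ ^ 2 * p / (c * L * ε ^ 2)) :=
  stmt13_general p d L hL c hc A hlow ζs Ω μ δ hL2 hindep σ hmean hvar
end

section
/- Let F: ℝᵖ → ℝᵈ (p ≤ d) be continuously differentiable, let D∈ℝᵈ, let C⊂ℝᵖ be a nonempty closed convex set, and let x*∈C satisfy F(x*)=D. Assume there exist an open neighbourhood N of x* and K>0 such that for every x∈N the derivative F′(x) (as a d×p matrix) has rank p and the pseudo-inverse satisfies ‖(F′(x)ᵀF′(x))^{−1}F′(x)ᵀ‖ ≤ K in operator norm. Consider the projected Gauss–Newton iteration x_{n+1} = P_C( (F′(x_n)ᵀF′(x_n))^{−1}F′(x_n)ᵀ ( D − F(x_n) + F′(x_n)x_n ) ), where P_C is the metric projection onto C. Then there exists r>0 such that for every x₀∈C with ‖x₀−x*‖ ≤ r, the iterates converge to x* at a superlinear rate: x_n → x*, and ‖x_{n+1} − x*‖ = o(‖x_n − x*‖), i.e., for every η>0 there exists ρ>0 such that ‖x_n − x*‖ ≤ ρ implies ‖x_{n+1} − x*‖ ≤ η‖x_n − x*‖. -/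
open Matrix Filter

/-- The Euclidean norm on `ℝⁿ`. -/
noncomputable def eucl {n : ℕ} (v : Fin n → ℝ) : ℝ := Real.sqrt (∑ i, v i ^ 2)

lemma eucl_eq_norm {n : ℕ} (v : Fin n → ℝ) :
    eucl v = ‖(WithLp.equiv 2 (Fin n → ℝ)).symm v‖ := by
  rw [EuclideanSpace.norm_eq]
  simp [eucl, sq_abs]

lemma eucl_nonneg {n : ℕ} (v : Fin n → ℝ) : 0 ≤ eucl v := Real.sqrt_nonneg _

lemma eucl_add_le {n : ℕ} (a b : Fin n → ℝ) : eucl (a + b) ≤ eucl a + eucl b := by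
  simp only [eucl_eq_norm]
  have h : (WithLp.equiv 2 (Fin n → ℝ)).symm (a + b)
      = (WithLp.equiv 2 (Fin n → ℝ)).symm a + (WithLp.equiv 2 (Fin n → ℝ)).symm b := rfl
  rw [h]; exact norm_add_le _ _

lemma eucl_sub_comm {n : ℕ} (a b : Fin n → ℝ) : eucl (a - b) = eucl (b - a) := by
  simp only [eucl_eq_norm]
  have h : (WithLp.equiv 2 (Fin n → ℝ)).symm (a - b)
      = -((WithLp.equiv 2 (Fin n → ℝ)).symm (b - a)) := by
    have : a - b = -(b - a) := by abel
    rw [this]; rfl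
  rw [h, norm_neg]

lemma norm_le_eucl {n : ℕ} (v : Fin n → ℝ) : ‖v‖ ≤ eucl v := by
  refine (pi_norm_le_iff_of_nonneg (eucl_nonneg v)).mpr fun i => ?_
  rw [Real.norm_eq_abs, ← Real.sqrt_sq_eq_abs]
  exact Real.sqrt_le_sqrt (Finset.single_le_sum (fun j _ => sq_nonneg (v j))
    (Finset.mem_univ i))

lemma eucl_le_sqrt_mul_norm {n : ℕ} (v : Fin n → ℝ) :
    eucl v ≤ Real.sqrt n * ‖v‖ := by
  have h1 : ∑ i, v i ^ 2 ≤ (n : ℝ) * ‖v‖ ^ 2 := by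
    calc ∑ i, v i ^ 2 ≤ ∑ _i : Fin n, ‖v‖ ^ 2 := by
          refine Finset.sum_le_sum fun i _ => ?_
          rw [← sq_abs]
          have : |v i| ≤ ‖v‖ := by
            have := norm_le_pi_norm v i
            rwa [Real.norm_eq_abs] at this
          exact pow_le_pow_left₀ (abs_nonneg _) this 2
      _ = (n : ℝ) * ‖v‖ ^ 2 := by simp [Finset.card_univ, mul_comm]
  calc eucl v ≤ Real.sqrt ((n : ℝ) * ‖v‖ ^ 2) := Real.sqrt_le_sqrt h1
    _ = Real.sqrt n * ‖v‖ := by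
        rw [Real.sqrt_mul (Nat.cast_nonneg n), Real.sqrt_sq (norm_nonneg v)]

lemma aux_isUnit_det {p : ℕ} (B : Matrix (Fin p) (Fin p) ℝ) (h : B.rank = p) :
    IsUnit B.det := by
  have hr : LinearMap.range B.mulVecLin = ⊤ := by
    apply Submodule.eq_top_of_finrank_eq
    have : Module.finrank ℝ (Fin p → ℝ) = p := by simp
    rw [this]
    exact h
  have hsurj : Function.Surjective B.mulVec := by
    intro y
    obtain ⟨x, hx⟩ := LinearMap.range_eq_top.mp hr y
    exact ⟨x, hx⟩
  exact (Matrix.isUnit_iff_isUnit_det B).mp (Matrix.mulVec_surjective_iff_isUnit.mp hsurj)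

/-- The linear map sending a matrix to its `mulVec` continuous linear map. -/
noncomputable def matCLM (p d : ℕ) :
    Matrix (Fin d) (Fin p) ℝ →ₗ[ℝ] ((Fin p → ℝ) →L[ℝ] (Fin d → ℝ)) where
  toFun M := M.mulVecLin.toContinuousLinearMap
  map_add' A B := by
    ext v
    simp [Matrix.add_mulVec]
  map_smul' c A := by
    ext v
    simp [Matrix.smul_mulVec]

/-- Local superlinear convergence of the projected Gauss–Newton iteration
`x_{n+1} = P_C((F′(x_n)ᵀF′(x_n))⁻¹F′(x_n)ᵀ(D − F(x_n) + F′(x_n)x_n))` towards a solution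
`x* ∈ C` of `F(x) = D`, assuming `F` is `C¹` near `x*` with full-rank Jacobian and a
uniform bound `K` on the Moore–Penrose pseudo-inverse. -/
theorem stmt17 (p d : ℕ) (hpd : p ≤ d)
    (F : (Fin p → ℝ) → Fin d → ℝ) (D : Fin d → ℝ)
    (C : Set (Fin p → ℝ)) (hCne : C.Nonempty) (hCcl : IsClosed C) (hCconv : Convex ℝ C)
    (xstar : Fin p → ℝ) (hxC : xstar ∈ C) (hsol : F xstar = D)
    (N : Set (Fin p → ℝ)) (hNopen : IsOpen N) (hxN : xstar ∈ N)
    (J : (Fin p → ℝ) → Matrix (Fin d) (Fin p) ℝ)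
    (hF' : ∀ x ∈ N, HasFDerivAt F ((J x).mulVecLin.toContinuousLinearMap) x)
    (hJcont : ContinuousOn J N)
    (hrank : ∀ x ∈ N, (J x).rank = p)
    (K : ℝ) (hK : 0 < K)
    (hpinv : ∀ x ∈ N, ∀ y : Fin d → ℝ,
      eucl ((((J x)ᵀ * J x)⁻¹ * (J x)ᵀ) *ᵥ y) ≤ K * eucl y)
    (PC : (Fin p → ℝ) → Fin p → ℝ)
    (hPC : ∀ y, PC y ∈ C ∧ ∀ z ∈ C, eucl (y - PC y) ≤ eucl (y - z)) :
    ∃ r > 0, ∀ x : ℕ → Fin p → ℝ,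
      x 0 ∈ C → eucl (x 0 - xstar) ≤ r →
      (∀ n, x (n + 1) =
        PC ((((J (x n))ᵀ * J (x n))⁻¹ * (J (x n))ᵀ) *ᵥ
          (D - F (x n) + J (x n) *ᵥ x n))) →
      Tendsto x atTop (nhds xstar)
      ∧ ∀ η : ℝ, 0 < η → ∃ ρ > 0, ∀ n,
          eucl (x n - xstar) ≤ ρ →
          eucl (x (n + 1) - xstar) ≤ η * eucl (x n - xstar) := by
  classical
  obtain ⟨ε0, hε0, hball⟩ := Metric.isOpen_iff.mp hNopen xstar hxN
  have hsd : (0:ℝ) ≤ Real.sqrt d := Real.sqrt_nonneg _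
  -- Key single-step superlinear estimate.
  have key : ∀ η : ℝ, 0 < η → ∃ ρ > 0, ∀ u : Fin p → ℝ, eucl (u - xstar) ≤ ρ →
      eucl (PC ((((J u)ᵀ * J u)⁻¹ * (J u)ᵀ) *ᵥ (D - F u + J u *ᵥ u)) - xstar)
        ≤ η * eucl (u - xstar) := by
    intro η hη
    set ε' : ℝ := η / (2 * K * (Real.sqrt d + 1)) with hε'def
    have hε' : 0 < ε' := div_pos hη (by positivity)
    have hcont : ContinuousAt (fun z => (matCLM p d) (J z)) xstar :=
      ((matCLM p d).continuous_of_finiteDimensional.continuousAt).comp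
        (hJcont.continuousAt (hNopen.mem_nhds hxN))
    obtain ⟨δ2, hδ2, h2⟩ := Metric.continuousAt_iff.mp hcont (ε'/2) (by positivity)
    set δ : ℝ := min (ε0/2) (δ2/2) with hδdef
    have hδ : 0 < δ := lt_min (by positivity) (by positivity)
    refine ⟨δ, hδ, ?_⟩
    intro u hu
    have hsubN : Metric.closedBall xstar δ ⊆ N := by
      intro z hz
      apply hball
      have h1 : dist z xstar ≤ δ := Metric.mem_closedBall.mp hz
      have h2' : δ < ε0 := lt_of_le_of_lt (min_le_left _ _) (by linarith)
      exact Metric.mem_ball.mpr (lt_of_le_of_lt h1 h2')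
    have hJclose : ∀ z ∈ Metric.closedBall xstar δ,
        ‖(matCLM p d) (J z) - (matCLM p d) (J xstar)‖ ≤ ε'/2 := by
      intro z hz
      have hlt : dist z xstar < δ2 :=
        lt_of_le_of_lt (Metric.mem_closedBall.mp hz)
          (lt_of_le_of_lt (min_le_right _ _) (by linarith))
      have := h2 hlt
      rw [dist_eq_norm] at this
      exact this.le
    have hu_ball : u ∈ Metric.closedBall xstar δ := by
      rw [Metric.mem_closedBall, dist_eq_norm]
      exact le_trans (norm_le_eucl _) hu
    have hx_ball : xstar ∈ Metric.closedBall xstar δ := Metric.mem_closedBall_self hδ.le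
    have hu_N : u ∈ N := hsubN hu_ball
    have hder : ∀ z ∈ Metric.closedBall xstar δ,
        HasFDerivWithinAt F ((matCLM p d) (J z)) (Metric.closedBall xstar δ) z :=
      fun z hz => (hF' z (hsubN hz)).hasFDerivWithinAt
    have hbound : ∀ z ∈ Metric.closedBall xstar δ,
        ‖(matCLM p d) (J z) - (matCLM p d) (J u)‖ ≤ ε' := by
      intro z hz
      have t := dist_triangle ((matCLM p d) (J z)) ((matCLM p d) (J xstar))
        ((matCLM p d) (J u))
      rw [dist_eq_norm, dist_eq_norm, dist_eq_norm] at t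
      have h3 : ‖(matCLM p d) (J xstar) - (matCLM p d) (J u)‖ ≤ ε'/2 := by
        rw [norm_sub_rev]
        exact hJclose u hu_ball
      have h4 := hJclose z hz
      linarith
    have hmvt := (convex_closedBall xstar δ).norm_image_sub_le_of_norm_hasFDerivWithin_le'
      hder hbound hu_ball hx_ball
    set w : Fin d → ℝ := F xstar - F u - J u *ᵥ (xstar - u) with hw
    have hφw : (matCLM p d) (J u) (xstar - u) = J u *ᵥ (xstar - u) := rfl
    have hw_norm : ‖w‖ ≤ ε' * ‖xstar - u‖ := by
      rw [hw, ← hφw]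
      exact hmvt
    have hw_eucl : eucl w ≤ Real.sqrt d * (ε' * eucl (u - xstar)) := by
      calc eucl w ≤ Real.sqrt d * ‖w‖ := eucl_le_sqrt_mul_norm w
        _ ≤ Real.sqrt d * (ε' * ‖xstar - u‖) := by
            exact mul_le_mul_of_nonneg_left hw_norm hsd
        _ ≤ Real.sqrt d * (ε' * eucl (u - xstar)) := by
            have h5 : ‖xstar - u‖ ≤ eucl (u - xstar) := by
              rw [← eucl_sub_comm]
              exact norm_le_eucl _
            have := mul_le_mul_of_nonneg_left h5 hε'.le
            exact mul_le_mul_of_nonneg_left this hsd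
    have hdet : IsUnit ((J u)ᵀ * J u).det := by
      apply aux_isUnit_det
      rw [Matrix.rank_transpose_mul_self]
      exact hrank u hu_N
    have hMJ : (((J u)ᵀ * J u)⁻¹ * (J u)ᵀ) * J u = 1 := by
      rw [Matrix.mul_assoc, Matrix.nonsing_inv_mul _ hdet]
    set y := (((J u)ᵀ * J u)⁻¹ * (J u)ᵀ) *ᵥ (D - F u + J u *ᵥ u) with hy
    have hyx : y - xstar = (((J u)ᵀ * J u)⁻¹ * (J u)ᵀ) *ᵥ w := by
      have h1 : (((J u)ᵀ * J u)⁻¹ * (J u)ᵀ) *ᵥ (J u *ᵥ xstar) = xstar := by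
        rw [Matrix.mulVec_mulVec, hMJ, Matrix.one_mulVec]
      have h2w : (D - F u + J u *ᵥ u) - J u *ᵥ xstar = w := by
        rw [hw, ← hsol, Matrix.mulVec_sub]
        abel
      rw [hy, ← h2w, Matrix.mulVec_sub, h1]
    have h5 : eucl (y - xstar) ≤ K * eucl w := by
      rw [hyx]
      exact hpinv u hu_N w
    have h6 : eucl (PC y - xstar) ≤ 2 * eucl (y - xstar) := by
      have t1 : eucl (PC y - xstar) ≤ eucl (PC y - y) + eucl (y - xstar) := by
        have heq : PC y - xstar = (PC y - y) + (y - xstar) := by abel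
        rw [heq]
        exact eucl_add_le _ _
      have t2 : eucl (PC y - y) = eucl (y - PC y) := eucl_sub_comm _ _
      have t3 : eucl (y - PC y) ≤ eucl (y - xstar) := (hPC y).2 xstar hxC
      linarith
    have hfinal : 2 * (K * (Real.sqrt d * ε')) ≤ η := by
      have hden : (0:ℝ) < 2 * K * (Real.sqrt d + 1) := by positivity
      have h1 : 2 * (K * (Real.sqrt d * ε')) = η * (Real.sqrt d / (Real.sqrt d + 1)) := by
        rw [hε'def]
        field_simp
      rw [h1]
      have h2' : Real.sqrt d / (Real.sqrt d + 1) ≤ 1 := by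
        rw [div_le_one (by positivity)]
        linarith
      nlinarith [hη.le]
    calc eucl (PC y - xstar) ≤ 2 * eucl (y - xstar) := h6
      _ ≤ 2 * (K * eucl w) := by linarith
      _ ≤ 2 * (K * (Real.sqrt d * (ε' * eucl (u - xstar)))) := by
          have := mul_le_mul_of_nonneg_left hw_eucl hK.le
          linarith
      _ = (2 * (K * (Real.sqrt d * ε'))) * eucl (u - xstar) := by ring
      _ ≤ η * eucl (u - xstar) :=
          mul_le_mul_of_nonneg_right hfinal (eucl_nonneg _)
  obtain ⟨ρ0, hρ0, hstep⟩ := key (1/2) (by norm_num)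
  refine ⟨ρ0, hρ0, ?_⟩
  intro x hx0C hx0 hiter
  have hdecay : ∀ n, eucl (x n - xstar) ≤ (1/2 : ℝ)^n * ρ0 := by
    intro n
    induction n with
    | zero => simpa using hx0
    | succ n ih =>
      have hpow : (1/2 : ℝ)^n ≤ 1 := pow_le_one₀ (by norm_num) (by norm_num)
      have hle : eucl (x n - xstar) ≤ ρ0 := by nlinarith
      have hs := hstep (x n) hle
      rw [← hiter n] at hs
      calc eucl (x (n+1) - xstar) ≤ 1/2 * eucl (x n - xstar) := hs
        _ ≤ 1/2 * ((1/2 : ℝ)^n * ρ0) := by linarith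
        _ = (1/2 : ℝ)^(n+1) * ρ0 := by ring
  constructor
  · rw [tendsto_iff_norm_sub_tendsto_zero]
    apply squeeze_zero (fun n => norm_nonneg _)
      (fun n => le_trans (norm_le_eucl _) (hdecay n))
    have ht : Tendsto (fun n : ℕ => (1/2 : ℝ)^n * ρ0) atTop (nhds (0 * ρ0)) :=
      (tendsto_pow_atTop_nhds_zero_of_lt_one (by norm_num) (by norm_num)).mul_const ρ0
    simpa using ht
  · intro η hη
    obtain ⟨ρ, hρ, h⟩ := key η hη
    exact ⟨ρ, hρ, fun n hn => by rw [hiter n]; exact h (x n) hn⟩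
end
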